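/- Suppose $\mu, \lambda, \rho, p$ satisfy the evolution equations $e^{-2\mu}(2t\dot\lambda + 1) + K - \Lambda t^2 = 8\pi t^2 \rho$ and $e^{-2\mu}(2t\dot\mu - 1) - K + \Lambda t^2 = 8\pi t^2 p$ for $t \ge t_0 > 0$, where $K \in \{-1,0,1\}$ and $\Lambda > 0$. Differentiating in $r$ yields $\dot\lambda' = [4\pi t^2 \rho' + \mu'(8\pi t^2 \rho - K + \Lambda t^2)] e^{2\mu} t^{-1}$ and $\dot\mu' = [4\pi t^2 p' + \mu'(8\pi t^2 p + K - \Lambda t^2)] e^{2\mu} t^{-1}$. Consequently, if $e^{2\mu} \le A t^{-2}$, $|\mu'| \le A t^{-3}$, $\rho \le A t^{-3}$, $|\rho'| \le A t^{-3}$, $p \le A t^{-5}$, $|p'| \le A t^{-5}$, then $|\dot\lambda'(t)| \le C t^{-4}$ and $|\dot\mu'(t)| \le C t^{-4}$ for a constant $C$ depending only on $A$, $\Lambda$; and integrating, $|\lambda'(t)| \le |\lambda'(t_0)| + \frac{C}{3} t_0^{-3}$ is bounded uniformly for $t \ge t_0$. -/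

import Mathlib

/-! Both equations have the shape `e^{-2μ}(a f + b) + c = g` with `f = λ̇` or `μ̇`. Differentiating
in `r` and substituting the undifferentiated equation back for `e^{-2μ}(a f + b)` expresses `f'`
through `μ'`, `g`, `g'` alone. Each factor of that expression is then bounded by a power of `t`,
giving `t⁻⁴` decay, and comparing `λ'` with the primitive `-(C/3) t⁻³` of `C t⁻⁴` bounds `λ'`. -/

open Real Set

theorem deriv_eq_of_exp_mul_affine_eq {m f g : ℝ → ℝ} {m' f' g' a b c r : ℝ} (ha : a ≠ 0)
    (hm : HasDerivAt m m' r) (hf : HasDerivAt f f' r) (hg : HasDerivAt g g' r)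
    (heq : ∀ x, exp (-2 * m x) * (a * f x + b) + c = g x) :
    f' = (g' + 2 * m' * (g r - c)) * exp (2 * m r) / a := by
  have hlhs : HasDerivAt (fun x => exp (-2 * m x) * (a * f x + b) + c)
      (exp (-2 * m r) * (-2 * m') * (a * f r + b) + exp (-2 * m r) * (a * f')) r :=
    ((hm.const_mul (-2)).exp.mul ((hf.const_mul a).add_const b)).add_const c
  have hderiv := hlhs.unique (by simpa only [← funext heq] using hg)
  have hexp : exp (-2 * m r) * exp (2 * m r) = 1 := by rw [← exp_add]; simp
  rw [eq_div_iff ha, ← heq r]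
  linear_combination exp (2 * m r) * hderiv - a * f' * hexp

theorem constraint_deriv_eq {m f q : ℝ → ℝ} {m' f' q' t K Λ r : ℝ} (ht : t ≠ 0)
    (hm : HasDerivAt m m' r) (hf : HasDerivAt f f' r) (hq : HasDerivAt q q' r)
    (heq : ∀ x, exp (-2 * m x) * (2 * t * f x + 1) + K - Λ * t ^ 2 = 8 * π * t ^ 2 * q x) :
    f' = (4 * π * t ^ 2 * q' + m' * (8 * π * t ^ 2 * q r - K + Λ * t ^ 2)) * exp (2 * m r) / t := by
  rw [deriv_eq_of_exp_mul_affine_eq (mul_ne_zero two_ne_zero ht) hm hf (hq.const_mul _)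
    (c := K - Λ * t ^ 2) fun x => by rw [← add_sub_assoc, heq x]]
  field_simp
  ring

theorem evolution_deriv_eq {m f q : ℝ → ℝ} {m' f' q' t K Λ r : ℝ} (ht : t ≠ 0)
    (hm : HasDerivAt m m' r) (hf : HasDerivAt f f' r) (hq : HasDerivAt q q' r)
    (heq : ∀ x, exp (-2 * m x) * (2 * t * f x - 1) - K + Λ * t ^ 2 = 8 * π * t ^ 2 * q x) :
    f' = (4 * π * t ^ 2 * q' + m' * (8 * π * t ^ 2 * q r + K - Λ * t ^ 2)) * exp (2 * m r) / t := by
  rw [deriv_eq_of_exp_mul_affine_eq (mul_ne_zero two_ne_zero ht) hm hf (hq.const_mul _)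
    (b := -1) (c := -K + Λ * t ^ 2) fun x => by rw [← heq x]; ring]
  field_simp
  ring

theorem div_pow_le_add_div_sq_div_pow {A t₀ t : ℝ} (hA : 0 ≤ A) (ht₀ : 0 < t₀) (ht : t₀ ≤ t)
    (k : ℕ) :
    A / t ^ k ≤ (A + A / t₀ ^ 2) / t ^ k ∧ A / t ^ (k + 2) ≤ (A + A / t₀ ^ 2) / t ^ k := by
  have ht0 := ht₀.trans_le ht
  have hA₀ : 0 ≤ A / t₀ ^ 2 := by positivity
  constructor
  · gcongr
    linarith
  · calc A / t ^ (k + 2) = A / t ^ 2 / t ^ k := by field_simp; ring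
      _ ≤ A / t₀ ^ 2 / t ^ k := by gcongr
      _ ≤ (A + A / t₀ ^ 2) / t ^ k := by gcongr; linarith

theorem abs_mixed_deriv_formula_le {t₀ t Λ B q q' m' s E : ℝ} (ht₀ : 0 < t₀) (ht : t₀ ≤ t)
    (hB : 0 ≤ B) (hq : |q| ≤ B / t ^ 3) (hq' : |q'| ≤ B / t ^ 3) (hm' : |m'| ≤ B / t ^ 3)
    (hE : 0 ≤ E) (hE' : E ≤ B / t ^ 2) (hs : |s| ≤ 1 + Λ * t ^ 2) :
    |(4 * π * t ^ 2 * q' + m' * (8 * π * t ^ 2 * q + s)) * E / t| ≤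
      B * (4 * π * B + 8 * π * B ^ 2 / t₀ ^ 3 + B / t₀ ^ 2 + Λ * B) / t ^ 4 := by
  have ht0 : 0 < t := ht₀.trans_le ht
  have hinner : |8 * π * t ^ 2 * q + s| ≤ 8 * π * B / t + 1 + Λ * t ^ 2 := calc
    _ ≤ 8 * π * t ^ 2 * |q| + |s| := by
      grw [abs_add_le, abs_mul, abs_of_nonneg (by positivity : 0 ≤ 8 * π * t ^ 2)]
    _ ≤ 8 * π * t ^ 2 * (B / t ^ 3) + (1 + Λ * t ^ 2) := by gcongr
    _ = _ := by field_simp; ring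
  have houter : |4 * π * t ^ 2 * q' + m' * (8 * π * t ^ 2 * q + s)| ≤
      (4 * π * B + 8 * π * B ^ 2 / t ^ 3 + B / t ^ 2 + Λ * B) / t := calc
    _ ≤ 4 * π * t ^ 2 * |q'| + |m'| * |8 * π * t ^ 2 * q + s| := by
      grw [abs_add_le, abs_mul (4 * π * t ^ 2), abs_mul m',
        abs_of_nonneg (by positivity : 0 ≤ 4 * π * t ^ 2)]
    _ ≤ 4 * π * t ^ 2 * (B / t ^ 3) + B / t ^ 3 * (8 * π * B / t + 1 + Λ * t ^ 2) := by
      gcongr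
    _ = _ := by field_simp; ring
  calc _ = |4 * π * t ^ 2 * q' + m' * (8 * π * t ^ 2 * q + s)| * E / t := by
        rw [abs_div, abs_mul, abs_of_nonneg hE, abs_of_pos ht0]
    _ ≤ (4 * π * B + 8 * π * B ^ 2 / t ^ 3 + B / t ^ 2 + Λ * B) / t * (B / t ^ 2) / t := by
        gcongr
        exact (abs_nonneg _).trans houter
    _ = B * (4 * π * B + 8 * π * B ^ 2 / t ^ 3 + B / t ^ 2 + Λ * B) / t ^ 4 := by
        field_simp
    _ ≤ _ := by gcongr

theorem abs_sub_le_of_abs_deriv_le_div_pow {f f' : ℝ → ℝ} {t₀ t C : ℝ} {n : ℕ} (hn : n ≠ 0)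
    (ht₀ : 0 < t₀) (ht : t₀ ≤ t) (hf : ∀ s, t₀ ≤ s → HasDerivAt f (f' s) s)
    (hf' : ∀ s, t₀ ≤ s → |f' s| ≤ C / s ^ (n + 1)) :
    |f t - f t₀| ≤ C / n * ((t₀ ^ n)⁻¹ - (t ^ n)⁻¹) := by
  have hboundary : ∀ s, 0 < s →
      HasDerivAt (fun x => C / n * ((t₀ ^ n)⁻¹ - (x ^ n)⁻¹)) (C / s ^ (n + 1)) s := by
    intro s hs
    refine ((((hasDerivAt_pow n s).inv (pow_ne_zero n hs.ne')).const_sub _).const_mul _).congr_deriv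
      ?_
    obtain ⟨k, rfl⟩ := Nat.exists_eq_add_one_of_ne_zero hn
    simp only [add_tsub_cancel_right]
    field_simp
    ring
  have hpos : ∀ s ∈ Icc t₀ t, 0 < s := fun s hs => ht₀.trans_le hs.1
  exact image_norm_le_of_norm_deriv_right_le_deriv_boundary' (f := fun x => f x - f t₀)
    (fun s hs => ((hf s hs.1).sub_const _).continuousAt.continuousWithinAt)
    (fun s hs => ((hf s hs.1).sub_const _).hasDerivWithinAt) (by simp)
    (fun s hs => (hboundary s (hpos s hs)).continuousAt.continuousWithinAt)
    (fun s hs => (hboundary s (hpos s (Ico_subset_Icc_self hs))).hasDerivWithinAt)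
    (fun s hs => hf' s hs.1) ⟨ht, le_rfl⟩

theorem abs_le_of_abs_deriv_le_div_pow {f f' : ℝ → ℝ} {t₀ t C : ℝ} {n : ℕ} (hn : n ≠ 0)
    (ht₀ : 0 < t₀) (ht : t₀ ≤ t) (hf : ∀ s, t₀ ≤ s → HasDerivAt f (f' s) s)
    (hf' : ∀ s, t₀ ≤ s → |f' s| ≤ C / s ^ (n + 1)) :
    |f t| ≤ |f t₀| + C / n / t₀ ^ n := by
  have hC : 0 ≤ C := by
    simpa using (le_div_iff₀ (by positivity)).mp ((abs_nonneg _).trans (hf' t₀ le_rfl))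
  have hdiff := abs_sub_le_of_abs_deriv_le_div_pow hn ht₀ ht hf hf'
  have htail : 0 ≤ C / n * (t ^ n)⁻¹ := by have := ht₀.trans_le ht; positivity
  have := abs_sub_abs_le_abs_sub (f t) (f t₀)
  have : C / n * ((t₀ ^ n)⁻¹ - (t ^ n)⁻¹) = C / n / t₀ ^ n - C / n * (t ^ n)⁻¹ := by ring
  linarith

theorem stmt_11_general (t₀ Λ A : ℝ) (K : ℤ) (hK : K = -1 ∨ K = 0 ∨ K = 1)
    (ht₀ : 0 < t₀) (hΛ : 0 < Λ) (hA : 0 < A)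
    (μ ρ p : ℝ → ℝ → ℝ)                -- functions of (t, r)
    (lamt μt : ℝ → ℝ → ℝ)                  -- time derivatives λ̇, μ̇
    (μr lamr ρr pr : ℝ → ℝ → ℝ)            -- r-derivatives μ', λ', ρ', p'
    (lamtr μtr : ℝ → ℝ → ℝ)                -- mixed derivatives λ̇', μ̇'
    (heq1 : ∀ t r, t₀ ≤ t →
      Real.exp (-2 * μ t r) * (2 * t * lamt t r + 1) + K - Λ * t ^ 2 =
        8 * Real.pi * t ^ 2 * ρ t r)
    (heq2 : ∀ t r, t₀ ≤ t →
      Real.exp (-2 * μ t r) * (2 * t * μt t r - 1) - K + Λ * t ^ 2 =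
        8 * Real.pi * t ^ 2 * p t r)
    (hdμr : ∀ t r, t₀ ≤ t → HasDerivAt (fun x => μ t x) (μr t r) r)
    (hdρr : ∀ t r, t₀ ≤ t → HasDerivAt (fun x => ρ t x) (ρr t r) r)
    (hdpr : ∀ t r, t₀ ≤ t → HasDerivAt (fun x => p t x) (pr t r) r)
    (hdlamtr : ∀ t r, t₀ ≤ t → HasDerivAt (fun x => lamt t x) (lamtr t r) r)
    (hdμtr : ∀ t r, t₀ ≤ t → HasDerivAt (fun x => μt t x) (μtr t r) r)
    (hdlamrt : ∀ t r, t₀ ≤ t → HasDerivAt (fun s => lamr s r) (lamtr t r) t)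
    (hbμ : ∀ t r, t₀ ≤ t → Real.exp (2 * μ t r) ≤ A / t ^ 2)
    (hbμr : ∀ t r, t₀ ≤ t → |μr t r| ≤ A / t ^ 3)
    (hbρ : ∀ t r, t₀ ≤ t → ρ t r ≤ A / t ^ 3)
    (hbρ0 : ∀ t r, t₀ ≤ t → 0 ≤ ρ t r)
    (hbρr : ∀ t r, t₀ ≤ t → |ρr t r| ≤ A / t ^ 3)
    (hbp : ∀ t r, t₀ ≤ t → p t r ≤ A / t ^ 5)
    (hbp0 : ∀ t r, t₀ ≤ t → 0 ≤ p t r)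
    (hbpr : ∀ t r, t₀ ≤ t → |pr t r| ≤ A / t ^ 5) :
    (∀ t r, t₀ ≤ t →
      lamtr t r = (4 * Real.pi * t ^ 2 * ρr t r +
          μr t r * (8 * Real.pi * t ^ 2 * ρ t r - K + Λ * t ^ 2)) *
            Real.exp (2 * μ t r) / t ∧
      μtr t r = (4 * Real.pi * t ^ 2 * pr t r +
          μr t r * (8 * Real.pi * t ^ 2 * p t r + K - Λ * t ^ 2)) *
            Real.exp (2 * μ t r) / t) ∧
    ∃ C : ℝ, 0 < C ∧
      (∀ t r, t₀ ≤ t → |lamtr t r| ≤ C / t ^ 4 ∧ |μtr t r| ≤ C / t ^ 4) ∧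
      (∀ t r, t₀ ≤ t → |lamr t r| ≤ |lamr t₀ r| + C / 3 / t₀ ^ 3) := by
  have hform t r (ht : t₀ ≤ t) :=
    have ht0 := (ht₀.trans_le ht).ne'
    And.intro (constraint_deriv_eq ht0 (hdμr t r ht) (hdlamtr t r ht) (hdρr t r ht) (heq1 t · ht))
      (evolution_deriv_eq ht0 (hdμr t r ht) (hdμtr t r ht) (hdpr t r ht) (heq2 t · ht))
  have hKabs : |(K : ℝ)| ≤ 1 := by rcases hK with h | h | h <;> simp [h]
  -- `A t⁻⁵ ≤ (A / t₀²) t⁻³`, so `B t⁻³` bounds `μ'`, `ρ`, `ρ'`, `p` and `p'` at once.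
  set B := A + A / t₀ ^ 2
  have hB0 : 0 < B := by positivity
  set C := B * (4 * π * B + 8 * π * B ^ 2 / t₀ ^ 3 + B / t₀ ^ 2 + Λ * B)
  have hbound : ∀ t r, t₀ ≤ t → |lamtr t r| ≤ C / t ^ 4 ∧ |μtr t r| ≤ C / t ^ 4 := by
    intro t r ht
    have hB := div_pow_le_add_div_sq_div_pow hA.le ht₀ ht
    have hs : |Λ * t ^ 2 - K| ≤ 1 + Λ * t ^ 2 :=
      (abs_sub _ _).trans (by rw [abs_of_nonneg (by positivity)]; linarith)
    have hμr := (hbμr t r ht).trans (hB 3).1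
    have hE := (hbμ t r ht).trans (hB 2).1
    rw [(hform t r ht).1, (hform t r ht).2, sub_add_eq_add_sub,
      add_sub_assoc (8 * π * t ^ 2 * ρ t r), add_sub_assoc (8 * π * t ^ 2 * p t r)]
    exact ⟨abs_mixed_deriv_formula_le ht₀ ht hB0.le
        ((abs_of_nonneg (hbρ0 t r ht)).trans_le ((hbρ t r ht).trans (hB 3).1))
        ((hbρr t r ht).trans (hB 3).1) hμr (exp_pos _).le hE hs,
      abs_mixed_deriv_formula_le ht₀ ht hB0.le
        ((abs_of_nonneg (hbp0 t r ht)).trans_le ((hbp t r ht).trans (hB 3).2))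
        ((hbpr t r ht).trans (hB 3).2) hμr (exp_pos _).le hE (by rwa [abs_sub_comm])⟩
  refine ⟨hform, C, by positivity, hbound, fun t r ht => ?_⟩
  simpa using abs_le_of_abs_deriv_le_div_pow (n := 3) three_ne_zero ht₀ ht
    (fun s hs => hdlamrt s r hs) (fun s hs => (hbound s r hs).1)

/-- Lemma 4.2 of the paper: from the evolution equations
`e^{-2μ}(2tλ̇+1) + K - Λt² = 8πt²ρ` and `e^{-2μ}(2tμ̇-1) - K + Λt² = 8πt²p`,
differentiating in `r` yields explicit formulas for `λ̇'` and `μ̇'`; the decay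
assumptions then give `|λ̇'| ≤ C t⁻⁴`, `|μ̇'| ≤ C t⁻⁴`, and upon time
integration `|λ'(t)| ≤ |λ'(t₀)| + (C/3) t₀⁻³`. -/
theorem stmt_11 (t₀ Λ A : ℝ) (K : ℤ) (hK : K = -1 ∨ K = 0 ∨ K = 1)
    (ht₀ : 0 < t₀) (hΛ : 0 < Λ) (hA : 0 < A)
    (μ lam ρ p : ℝ → ℝ → ℝ)                -- functions of (t, r)
    (lamt μt : ℝ → ℝ → ℝ)                  -- time derivatives λ̇, μ̇
    (μr lamr ρr pr : ℝ → ℝ → ℝ)            -- r-derivatives μ', λ', ρ', p'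
    (lamtr μtr : ℝ → ℝ → ℝ)                -- mixed derivatives λ̇', μ̇'
    (heq1 : ∀ t r, t₀ ≤ t →
      Real.exp (-2 * μ t r) * (2 * t * lamt t r + 1) + K - Λ * t ^ 2 =
        8 * Real.pi * t ^ 2 * ρ t r)
    (heq2 : ∀ t r, t₀ ≤ t →
      Real.exp (-2 * μ t r) * (2 * t * μt t r - 1) - K + Λ * t ^ 2 =
        8 * Real.pi * t ^ 2 * p t r)
    (hdμr : ∀ t r, t₀ ≤ t → HasDerivAt (fun x => μ t x) (μr t r) r)
    (hdρr : ∀ t r, t₀ ≤ t → HasDerivAt (fun x => ρ t x) (ρr t r) r)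
    (hdpr : ∀ t r, t₀ ≤ t → HasDerivAt (fun x => p t x) (pr t r) r)
    (hdlamtr : ∀ t r, t₀ ≤ t → HasDerivAt (fun x => lamt t x) (lamtr t r) r)
    (hdμtr : ∀ t r, t₀ ≤ t → HasDerivAt (fun x => μt t x) (μtr t r) r)
    (hdlamrt : ∀ t r, t₀ ≤ t → HasDerivAt (fun s => lamr s r) (lamtr t r) t)
    (hbμ : ∀ t r, t₀ ≤ t → Real.exp (2 * μ t r) ≤ A / t ^ 2)
    (hbμr : ∀ t r, t₀ ≤ t → |μr t r| ≤ A / t ^ 3)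
    (hbρ : ∀ t r, t₀ ≤ t → ρ t r ≤ A / t ^ 3)
    (hbρ0 : ∀ t r, t₀ ≤ t → 0 ≤ ρ t r)
    (hbρr : ∀ t r, t₀ ≤ t → |ρr t r| ≤ A / t ^ 3)
    (hbp : ∀ t r, t₀ ≤ t → p t r ≤ A / t ^ 5)
    (hbp0 : ∀ t r, t₀ ≤ t → 0 ≤ p t r)
    (hbpr : ∀ t r, t₀ ≤ t → |pr t r| ≤ A / t ^ 5) :
    (∀ t r, t₀ ≤ t →
      lamtr t r = (4 * Real.pi * t ^ 2 * ρr t r +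
          μr t r * (8 * Real.pi * t ^ 2 * ρ t r - K + Λ * t ^ 2)) *
            Real.exp (2 * μ t r) / t ∧
      μtr t r = (4 * Real.pi * t ^ 2 * pr t r +
          μr t r * (8 * Real.pi * t ^ 2 * p t r + K - Λ * t ^ 2)) *
            Real.exp (2 * μ t r) / t) ∧
    ∃ C : ℝ, 0 < C ∧
      (∀ t r, t₀ ≤ t → |lamtr t r| ≤ C / t ^ 4 ∧ |μtr t r| ≤ C / t ^ 4) ∧
      (∀ t r, t₀ ≤ t → |lamr t r| ≤ |lamr t₀ r| + C / 3 / t₀ ^ 3) :=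
  stmt_11_general t₀ Λ A K hK ht₀ hΛ hA μ ρ p lamt μt μr lamr ρr pr lamtr μtr heq1 heq2 hdμr hdρr
    hdpr hdlamtr hdμtr hdlamrt hbμ hbμr hbρ hbρ0 hbρr hbp hbp0 hbpr
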